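/- On ℂ² × ℂ² with the product Poisson structure {z^A, conj(z^B)} = -i δ^{AB}, {z̃^A, conj(z̃^B)} = -i δ^{AB} (and all brackets between z and z̃ vanishing), the area-matching function M(z,z̃) = ⟨z|z⟩ − ⟨z̃|z̃⟩ Poisson-commutes with X_i(z), with X̃_i(z̃), and with every matrix entry of g(z,z̃). -/

import Mathlib

open BigOperators Matrix

noncomputable section

abbrev V : Type := Fin 2 → ℂ

/-- The Pauli matrices. -/
def pauli : Fin 3 → Matrix (Fin 2) (Fin 2) ℂ
  | 0 => !![0, 1; 1, 0]
  | 1 => !![0, -Complex.I; Complex.I, 0]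
  | 2 => !![1, 0; 0, -1]

/-- Functions on the phase space ℂ² × ℂ² are represented as functions `f z zb zt ztb` of the
holomorphic coordinates `z, z̃` and the antiholomorphic coordinates `zb = z̄, ztb = z̃̄`. -/
def d1 (f : V → V → V → V → ℂ) (A : Fin 2) (z zb zt ztb : V) : ℂ :=
  fderiv ℂ (fun x => f x zb zt ztb) z (Pi.single A 1)
def d2 (f : V → V → V → V → ℂ) (A : Fin 2) (z zb zt ztb : V) : ℂ :=
  fderiv ℂ (fun x => f z x zt ztb) zb (Pi.single A 1)
def d3 (f : V → V → V → V → ℂ) (A : Fin 2) (z zb zt ztb : V) : ℂ :=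
  fderiv ℂ (fun x => f z zb x ztb) zt (Pi.single A 1)
def d4 (f : V → V → V → V → ℂ) (A : Fin 2) (z zb zt ztb : V) : ℂ :=
  fderiv ℂ (fun x => f z zb zt x) ztb (Pi.single A 1)

/-- Product Poisson bracket on ℂ² × ℂ²: `{z^A, z̄^B} = -i δ^{AB}`,
`{z̃^A, z̃̄^B} = -i δ^{AB}`, all cross brackets vanishing, extended as a biderivation. -/
def pb2 (f g : V → V → V → V → ℂ) (z zb zt ztb : V) : ℂ :=
  -Complex.I * ∑ A, (d1 f A z zb zt ztb * d2 g A z zb zt ztb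
      - d1 g A z zb zt ztb * d2 f A z zb zt ztb)
  + -Complex.I * ∑ A, (d3 f A z zb zt ztb * d4 g A z zb zt ztb
      - d3 g A z zb zt ztb * d4 f A z zb zt ztb)

/-- The area matching function `M = ⟨z|z⟩ − ⟨z̃|z̃⟩`. -/
def Mfun (z zb zt ztb : V) : ℂ := (∑ A, zb A * z A) - ∑ A, ztb A * zt A

/-- `X_i(z) = (1/2)⟨z|σ_i|z⟩`. -/
def Xfun (i : Fin 3) (z zb _zt _ztb : V) : ℂ :=
  (1 / 2 : ℂ) * ∑ A, ∑ B, zb A * pauli i A B * z B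

/-- `X̃_i(z̃) = (1/2)⟨z̃|σ_i|z̃⟩`. -/
def Xtfun (i : Fin 3) (_z _zb zt ztb : V) : ℂ :=
  (1 / 2 : ℂ) * ∑ A, ∑ B, ztb A * pauli i A B * zt B

/-- The matrix entries of `g(z,z̃) = (|z⟩[z̃| − |z]⟨z̃|)/√(⟨z|z⟩⟨z̃|z̃⟩)`, written as
holomorphic functions of `(z, z̄, z̃, z̃̄)` (the square root is the principal power `w^{1/2}`). -/
def gfun (A B : Fin 2) (z zb zt ztb : V) : ℂ :=
  (z A * ![-(zt 1), zt 0] B - ![-(zb 1), zb 0] A * ztb B) /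
    (((∑ C, zb C * z C) * ∑ C, ztb C * zt C) ^ ((1 : ℂ) / 2))

/-- The point of phase space with antiholomorphic coordinates equal to the conjugates. -/
def conjPt (f : V → V → V → V → ℂ) (z zt : V) : ℂ :=
  f z (fun A => (starRingEnd ℂ) (z A)) zt (fun A => (starRingEnd ℂ) (zt A))

/-- The squared norm `⟨z|z⟩` of a spinor. -/
def normsq (z : V) : ℝ := ∑ A, Complex.normSq (z A)
section Helpers

open Complex

private lemma hasF_lin0 (c0 c1 : ℂ) (z : V) :
    HasFDerivAt (fun x : V => c0 * x 0 + c1 * x 1)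
      (c0 • (ContinuousLinearMap.proj 0 : V →L[ℂ] ℂ)
        + c1 • (ContinuousLinearMap.proj 1 : V →L[ℂ] ℂ)) z := by
  have h0 : HasFDerivAt (fun x : V => x 0)
      (ContinuousLinearMap.proj 0 : V →L[ℂ] ℂ) z :=
    (ContinuousLinearMap.proj (R := ℂ) (φ := fun _ : Fin 2 => ℂ) 0).hasFDerivAt
  have h1 : HasFDerivAt (fun x : V => x 1)
      (ContinuousLinearMap.proj 1 : V →L[ℂ] ℂ) z :=
    (ContinuousLinearMap.proj (R := ℂ) (φ := fun _ : Fin 2 => ℂ) 1).hasFDerivAt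
  exact (h0.const_mul c0).add (h1.const_mul c1)

private lemma hasF_lin (c0 c1 a : ℂ) (z : V) :
    HasFDerivAt (fun x : V => c0 * x 0 + c1 * x 1 + a)
      (c0 • (ContinuousLinearMap.proj 0 : V →L[ℂ] ℂ)
        + c1 • (ContinuousLinearMap.proj 1 : V →L[ℂ] ℂ)) z :=
  (hasF_lin0 c0 c1 z).add_const a

private lemma d_lin (c0 c1 a : ℂ) (z : V) (A : Fin 2) :
    fderiv ℂ (fun x : V => c0 * x 0 + c1 * x 1 + a) z (Pi.single A 1) = ![c0, c1] A := by
  rw [(hasF_lin c0 c1 a z).fderiv]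
  fin_cases A <;>
    simp [ContinuousLinearMap.proj_apply, Pi.single_apply]

private lemma d_quot (n0 n1 na s0 s1 w : ℂ) (z : V) (A : Fin 2)
    (hw : s0 * z 0 + s1 * z 1 = w) (hsl : w ∈ Complex.slitPlane) :
    fderiv ℂ (fun x : V => (n0 * x 0 + n1 * x 1 + na) /
        ((s0 * x 0 + s1 * x 1) ^ ((1 : ℂ) / 2))) z (Pi.single A 1)
      = ![n0, n1] A * (w ^ ((1 : ℂ) / 2))⁻¹
        - (n0 * z 0 + n1 * z 1 + na) * (((1 : ℂ) / 2) * w ^ ((1 : ℂ) / 2 - 1)) * ![s0, s1] A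
            * ((w ^ ((1 : ℂ) / 2)) ^ 2)⁻¹ := by
  have hw0 : w ≠ 0 := Complex.slitPlane_ne_zero hsl
  have hW : w ^ ((1 : ℂ) / 2) ≠ 0 := by
    rw [Complex.cpow_def_of_ne_zero hw0]; exact Complex.exp_ne_zero _
  have hN := hasF_lin n0 n1 na z
  have hS := hasF_lin0 s0 s1 z
  have hpow : HasDerivAt (fun y : ℂ => y ^ ((1 : ℂ) / 2))
      (((1 : ℂ) / 2) * w ^ ((1 : ℂ) / 2 - 1)) w :=
    (Complex.hasStrictDerivAt_cpow_const hsl).hasDerivAt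
  have hD : HasFDerivAt (fun x : V => (s0 * x 0 + s1 * x 1) ^ ((1 : ℂ) / 2))
      ((((1 : ℂ) / 2) * w ^ ((1 : ℂ) / 2 - 1)) •
        (s0 • (ContinuousLinearMap.proj 0 : V →L[ℂ] ℂ)
          + s1 • (ContinuousLinearMap.proj 1 : V →L[ℂ] ℂ))) z :=
    hpow.comp_hasFDerivAt_of_eq z hS hw.symm
  have hinv : HasDerivAt (fun y : ℂ => y⁻¹) (-((w ^ ((1 : ℂ) / 2)) ^ 2)⁻¹)
      (w ^ ((1 : ℂ) / 2)) := hasDerivAt_inv hW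
  have hDinv : HasFDerivAt (fun x : V => (((s0 * x 0 + s1 * x 1) ^ ((1 : ℂ) / 2)))⁻¹)
      ((-((w ^ ((1 : ℂ) / 2)) ^ 2)⁻¹) • ((((1 : ℂ) / 2) * w ^ ((1 : ℂ) / 2 - 1)) •
        (s0 • (ContinuousLinearMap.proj 0 : V →L[ℂ] ℂ)
          + s1 • (ContinuousLinearMap.proj 1 : V →L[ℂ] ℂ)))) z :=
    hinv.comp_hasFDerivAt_of_eq z hD (by rw [hw])
  have hmul := hN.mul hDinv
  simp only [Pi.mul_def] at hmul
  have heq : (fun x : V => (n0 * x 0 + n1 * x 1 + na) /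
        ((s0 * x 0 + s1 * x 1) ^ ((1 : ℂ) / 2)))
      = fun x : V => (n0 * x 0 + n1 * x 1 + na) *
        (((s0 * x 0 + s1 * x 1) ^ ((1 : ℂ) / 2)))⁻¹ := by
    funext x; rw [div_eq_mul_inv]
  rw [heq, hmul.fderiv, hw]
  fin_cases A <;>
    simp [ContinuousLinearMap.proj_apply, Pi.single_apply, smul_eq_mul] <;> ring

end Helpers
section MX

private lemma d1_M (A : Fin 2) (z zb zt ztb : V) : d1 Mfun A z zb zt ztb = zb A := by
  have e : (fun x : V => Mfun x zb zt ztb)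
      = fun x : V => zb 0 * x 0 + zb 1 * x 1 + (-(ztb 0 * zt 0 + ztb 1 * zt 1)) := by
    funext x; simp [Mfun, Fin.sum_univ_two]; ring
  rw [d1, e, d_lin]
  fin_cases A <;> simp

private lemma d2_M (A : Fin 2) (z zb zt ztb : V) : d2 Mfun A z zb zt ztb = z A := by
  have e : (fun x : V => Mfun z x zt ztb)
      = fun x : V => z 0 * x 0 + z 1 * x 1 + (-(ztb 0 * zt 0 + ztb 1 * zt 1)) := by
    funext x; simp [Mfun, Fin.sum_univ_two]; ring
  rw [d2, e, d_lin]
  fin_cases A <;> simp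

private lemma d3_M (A : Fin 2) (z zb zt ztb : V) : d3 Mfun A z zb zt ztb = -ztb A := by
  have e : (fun x : V => Mfun z zb x ztb)
      = fun x : V => (-(ztb 0)) * x 0 + (-(ztb 1)) * x 1 + (zb 0 * z 0 + zb 1 * z 1) := by
    funext x; simp [Mfun, Fin.sum_univ_two]; ring
  rw [d3, e, d_lin]
  fin_cases A <;> simp

private lemma d4_M (A : Fin 2) (z zb zt ztb : V) : d4 Mfun A z zb zt ztb = -zt A := by
  have e : (fun x : V => Mfun z zb zt x)
      = fun x : V => (-(zt 0)) * x 0 + (-(zt 1)) * x 1 + (zb 0 * z 0 + zb 1 * z 1) := by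
    funext x; simp [Mfun, Fin.sum_univ_two]; ring
  rw [d4, e, d_lin]
  fin_cases A <;> simp

private lemma d1_X (i : Fin 3) (A : Fin 2) (z zb zt ztb : V) :
    d1 (Xfun i) A z zb zt ztb
      = (1 / 2 : ℂ) * (zb 0 * pauli i 0 A + zb 1 * pauli i 1 A) := by
  have e : (fun x : V => Xfun i x zb zt ztb)
      = fun x : V => ((1 / 2 : ℂ) * (zb 0 * pauli i 0 0 + zb 1 * pauli i 1 0)) * x 0
          + ((1 / 2 : ℂ) * (zb 0 * pauli i 0 1 + zb 1 * pauli i 1 1)) * x 1 + 0 := by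
    funext x; simp [Xfun, Fin.sum_univ_two]; ring
  rw [d1, e, d_lin]
  fin_cases A <;> simp

private lemma d2_X (i : Fin 3) (A : Fin 2) (z zb zt ztb : V) :
    d2 (Xfun i) A z zb zt ztb
      = (1 / 2 : ℂ) * (pauli i A 0 * z 0 + pauli i A 1 * z 1) := by
  have e : (fun x : V => Xfun i z x zt ztb)
      = fun x : V => ((1 / 2 : ℂ) * (pauli i 0 0 * z 0 + pauli i 0 1 * z 1)) * x 0
          + ((1 / 2 : ℂ) * (pauli i 1 0 * z 0 + pauli i 1 1 * z 1)) * x 1 + 0 := by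
    funext x; simp [Xfun, Fin.sum_univ_two]; ring
  rw [d2, e, d_lin]
  fin_cases A <;> simp

private lemma d3_X (i : Fin 3) (A : Fin 2) (z zb zt ztb : V) :
    d3 (Xfun i) A z zb zt ztb = 0 := by
  rw [d3]; simp [Xfun]

private lemma d4_X (i : Fin 3) (A : Fin 2) (z zb zt ztb : V) :
    d4 (Xfun i) A z zb zt ztb = 0 := by
  rw [d4]; simp [Xfun]

private lemma d1_Xt (i : Fin 3) (A : Fin 2) (z zb zt ztb : V) :
    d1 (Xtfun i) A z zb zt ztb = 0 := by
  rw [d1]; simp [Xtfun]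

private lemma d2_Xt (i : Fin 3) (A : Fin 2) (z zb zt ztb : V) :
    d2 (Xtfun i) A z zb zt ztb = 0 := by
  rw [d2]; simp [Xtfun]

private lemma d3_Xt (i : Fin 3) (A : Fin 2) (z zb zt ztb : V) :
    d3 (Xtfun i) A z zb zt ztb
      = (1 / 2 : ℂ) * (ztb 0 * pauli i 0 A + ztb 1 * pauli i 1 A) := by
  have e : (fun x : V => Xtfun i z zb x ztb)
      = fun x : V => ((1 / 2 : ℂ) * (ztb 0 * pauli i 0 0 + ztb 1 * pauli i 1 0)) * x 0
          + ((1 / 2 : ℂ) * (ztb 0 * pauli i 0 1 + ztb 1 * pauli i 1 1)) * x 1 + 0 := by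
    funext x; simp [Xtfun, Fin.sum_univ_two]; ring
  rw [d3, e, d_lin]
  fin_cases A <;> simp

private lemma d4_Xt (i : Fin 3) (A : Fin 2) (z zb zt ztb : V) :
    d4 (Xtfun i) A z zb zt ztb
      = (1 / 2 : ℂ) * (pauli i A 0 * zt 0 + pauli i A 1 * zt 1) := by
  have e : (fun x : V => Xtfun i z zb zt x)
      = fun x : V => ((1 / 2 : ℂ) * (pauli i 0 0 * zt 0 + pauli i 0 1 * zt 1)) * x 0
          + ((1 / 2 : ℂ) * (pauli i 1 0 * zt 0 + pauli i 1 1 * zt 1)) * x 1 + 0 := by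
    funext x; simp [Xtfun, Fin.sum_univ_two]; ring
  rw [d4, e, d_lin]
  fin_cases A <;> simp

end MX
section G

private lemma d1_g (A B A0 : Fin 2) (z zb zt ztb : V) (w : ℂ)
    (hw : (zb 0 * z 0 + zb 1 * z 1) * (ztb 0 * zt 0 + ztb 1 * zt 1) = w)
    (hsl : w ∈ Complex.slitPlane) :
    d1 (gfun A B) A0 z zb zt ztb
      = (Pi.single A0 1 : V) A * ![-(zt 1), zt 0] B * (w ^ ((1 : ℂ) / 2))⁻¹
        - (z A * ![-(zt 1), zt 0] B - ![-(zb 1), zb 0] A * ztb B)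
            * (((1 : ℂ) / 2) * w ^ ((1 : ℂ) / 2 - 1))
            * (zb A0 * (ztb 0 * zt 0 + ztb 1 * zt 1))
            * ((w ^ ((1 : ℂ) / 2)) ^ 2)⁻¹ := by
  fin_cases A <;> simp only [Fin.zero_eta, Fin.mk_one, Fin.isValue]
  · have e : (fun x : V => gfun 0 B x zb zt ztb)
        = fun x : V => (![-(zt 1), zt 0] B * x 0 + 0 * x 1 + zb 1 * ztb B) /
            (((zb 0 * (ztb 0 * zt 0 + ztb 1 * zt 1)) * x 0
              + (zb 1 * (ztb 0 * zt 0 + ztb 1 * zt 1)) * x 1) ^ ((1 : ℂ) / 2)) := by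
      funext x
      simp only [gfun, Fin.sum_univ_two, Matrix.cons_val_zero, Matrix.cons_val_one,
        Matrix.head_cons]
      congr 1
      · ring
      · congr 1; ring
    rw [d1, e, d_quot (![-(zt 1), zt 0] B) 0 (zb 1 * ztb B)
      (zb 0 * (ztb 0 * zt 0 + ztb 1 * zt 1)) (zb 1 * (ztb 0 * zt 0 + ztb 1 * zt 1))
      w z A0 (by rw [← hw]; ring) hsl]
    fin_cases A0 <;>
      simp only [Pi.single_apply, Matrix.cons_val_zero, Matrix.cons_val_one,
        Matrix.head_cons, Fin.zero_eta, Fin.mk_one, Fin.isValue, Fin.reduceEq, reduceIte] <;>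
      ring
  · have e : (fun x : V => gfun 1 B x zb zt ztb)
        = fun x : V => (0 * x 0 + ![-(zt 1), zt 0] B * x 1 + (-(zb 0 * ztb B))) /
            (((zb 0 * (ztb 0 * zt 0 + ztb 1 * zt 1)) * x 0
              + (zb 1 * (ztb 0 * zt 0 + ztb 1 * zt 1)) * x 1) ^ ((1 : ℂ) / 2)) := by
      funext x
      simp only [gfun, Fin.sum_univ_two, Matrix.cons_val_zero, Matrix.cons_val_one,
        Matrix.head_cons]
      congr 1
      · ring
      · congr 1; ring
    rw [d1, e, d_quot 0 (![-(zt 1), zt 0] B) (-(zb 0 * ztb B))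
      (zb 0 * (ztb 0 * zt 0 + ztb 1 * zt 1)) (zb 1 * (ztb 0 * zt 0 + ztb 1 * zt 1))
      w z A0 (by rw [← hw]; ring) hsl]
    fin_cases A0 <;>
      simp only [Pi.single_apply, Matrix.cons_val_zero, Matrix.cons_val_one,
        Matrix.head_cons, Fin.zero_eta, Fin.mk_one, Fin.isValue, Fin.reduceEq, reduceIte] <;>
      ring

private lemma d2_g (A B A0 : Fin 2) (z zb zt ztb : V) (w : ℂ)
    (hw : (zb 0 * z 0 + zb 1 * z 1) * (ztb 0 * zt 0 + ztb 1 * zt 1) = w)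
    (hsl : w ∈ Complex.slitPlane) :
    d2 (gfun A B) A0 z zb zt ztb
      = -(![-((Pi.single A0 1 : V) 1), (Pi.single A0 1 : V) 0] A * ztb B)
            * (w ^ ((1 : ℂ) / 2))⁻¹
        - (z A * ![-(zt 1), zt 0] B - ![-(zb 1), zb 0] A * ztb B)
            * (((1 : ℂ) / 2) * w ^ ((1 : ℂ) / 2 - 1))
            * (z A0 * (ztb 0 * zt 0 + ztb 1 * zt 1))
            * ((w ^ ((1 : ℂ) / 2)) ^ 2)⁻¹ := by
  fin_cases A <;> simp only [Fin.zero_eta, Fin.mk_one, Fin.isValue]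
  · have e : (fun x : V => gfun 0 B z x zt ztb)
        = fun x : V => (0 * x 0 + ztb B * x 1 + z 0 * ![-(zt 1), zt 0] B) /
            (((z 0 * (ztb 0 * zt 0 + ztb 1 * zt 1)) * x 0
              + (z 1 * (ztb 0 * zt 0 + ztb 1 * zt 1)) * x 1) ^ ((1 : ℂ) / 2)) := by
      funext x
      simp only [gfun, Fin.sum_univ_two, Matrix.cons_val_zero, Matrix.cons_val_one,
        Matrix.head_cons]
      congr 1
      · ring
      · congr 1; ring
    rw [d2, e, d_quot 0 (ztb B) (z 0 * ![-(zt 1), zt 0] B)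
      (z 0 * (ztb 0 * zt 0 + ztb 1 * zt 1)) (z 1 * (ztb 0 * zt 0 + ztb 1 * zt 1))
      w zb A0 (by rw [← hw]; ring) hsl]
    fin_cases A0 <;>
      simp only [Pi.single_apply, Matrix.cons_val_zero, Matrix.cons_val_one,
        Matrix.head_cons, Fin.zero_eta, Fin.mk_one, Fin.isValue, Fin.reduceEq, reduceIte] <;>
      ring
  · have e : (fun x : V => gfun 1 B z x zt ztb)
        = fun x : V => ((-(ztb B)) * x 0 + 0 * x 1 + z 1 * ![-(zt 1), zt 0] B) /
            (((z 0 * (ztb 0 * zt 0 + ztb 1 * zt 1)) * x 0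
              + (z 1 * (ztb 0 * zt 0 + ztb 1 * zt 1)) * x 1) ^ ((1 : ℂ) / 2)) := by
      funext x
      simp only [gfun, Fin.sum_univ_two, Matrix.cons_val_zero, Matrix.cons_val_one,
        Matrix.head_cons]
      congr 1
      · ring
      · congr 1; ring
    rw [d2, e, d_quot (-(ztb B)) 0 (z 1 * ![-(zt 1), zt 0] B)
      (z 0 * (ztb 0 * zt 0 + ztb 1 * zt 1)) (z 1 * (ztb 0 * zt 0 + ztb 1 * zt 1))
      w zb A0 (by rw [← hw]; ring) hsl]
    fin_cases A0 <;>
      simp only [Pi.single_apply, Matrix.cons_val_zero, Matrix.cons_val_one,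
        Matrix.head_cons, Fin.zero_eta, Fin.mk_one, Fin.isValue, Fin.reduceEq, reduceIte] <;>
      ring

private lemma d3_g (A B A0 : Fin 2) (z zb zt ztb : V) (w : ℂ)
    (hw : (zb 0 * z 0 + zb 1 * z 1) * (ztb 0 * zt 0 + ztb 1 * zt 1) = w)
    (hsl : w ∈ Complex.slitPlane) :
    d3 (gfun A B) A0 z zb zt ztb
      = z A * ![-((Pi.single A0 1 : V) 1), (Pi.single A0 1 : V) 0] B
            * (w ^ ((1 : ℂ) / 2))⁻¹
        - (z A * ![-(zt 1), zt 0] B - ![-(zb 1), zb 0] A * ztb B)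
            * (((1 : ℂ) / 2) * w ^ ((1 : ℂ) / 2 - 1))
            * ((zb 0 * z 0 + zb 1 * z 1) * ztb A0)
            * ((w ^ ((1 : ℂ) / 2)) ^ 2)⁻¹ := by
  fin_cases B <;> simp only [Fin.zero_eta, Fin.mk_one, Fin.isValue]
  · have e : (fun x : V => gfun A 0 z zb x ztb)
        = fun x : V => (0 * x 0 + (-(z A)) * x 1 + (-(![-(zb 1), zb 0] A * ztb 0))) /
            ((((zb 0 * z 0 + zb 1 * z 1) * ztb 0) * x 0
              + ((zb 0 * z 0 + zb 1 * z 1) * ztb 1) * x 1) ^ ((1 : ℂ) / 2)) := by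
      funext x
      simp only [gfun, Fin.sum_univ_two, Matrix.cons_val_zero, Matrix.cons_val_one,
        Matrix.head_cons]
      congr 1
      · ring
      · congr 1; ring
    rw [d3, e, d_quot 0 (-(z A)) (-(![-(zb 1), zb 0] A * ztb 0))
      ((zb 0 * z 0 + zb 1 * z 1) * ztb 0) ((zb 0 * z 0 + zb 1 * z 1) * ztb 1)
      w zt A0 (by rw [← hw]; ring) hsl]
    fin_cases A0 <;>
      simp only [Pi.single_apply, Matrix.cons_val_zero, Matrix.cons_val_one,
        Matrix.head_cons, Fin.zero_eta, Fin.mk_one, Fin.isValue, Fin.reduceEq, reduceIte] <;>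
      ring
  · have e : (fun x : V => gfun A 1 z zb x ztb)
        = fun x : V => (z A * x 0 + 0 * x 1 + (-(![-(zb 1), zb 0] A * ztb 1))) /
            ((((zb 0 * z 0 + zb 1 * z 1) * ztb 0) * x 0
              + ((zb 0 * z 0 + zb 1 * z 1) * ztb 1) * x 1) ^ ((1 : ℂ) / 2)) := by
      funext x
      simp only [gfun, Fin.sum_univ_two, Matrix.cons_val_zero, Matrix.cons_val_one,
        Matrix.head_cons]
      congr 1
      · ring
      · congr 1; ring
    rw [d3, e, d_quot (z A) 0 (-(![-(zb 1), zb 0] A * ztb 1))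
      ((zb 0 * z 0 + zb 1 * z 1) * ztb 0) ((zb 0 * z 0 + zb 1 * z 1) * ztb 1)
      w zt A0 (by rw [← hw]; ring) hsl]
    fin_cases A0 <;>
      simp only [Pi.single_apply, Matrix.cons_val_zero, Matrix.cons_val_one,
        Matrix.head_cons, Fin.zero_eta, Fin.mk_one, Fin.isValue, Fin.reduceEq, reduceIte] <;>
      ring

private lemma d4_g (A B A0 : Fin 2) (z zb zt ztb : V) (w : ℂ)
    (hw : (zb 0 * z 0 + zb 1 * z 1) * (ztb 0 * zt 0 + ztb 1 * zt 1) = w)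
    (hsl : w ∈ Complex.slitPlane) :
    d4 (gfun A B) A0 z zb zt ztb
      = -(![-(zb 1), zb 0] A * (Pi.single A0 1 : V) B) * (w ^ ((1 : ℂ) / 2))⁻¹
        - (z A * ![-(zt 1), zt 0] B - ![-(zb 1), zb 0] A * ztb B)
            * (((1 : ℂ) / 2) * w ^ ((1 : ℂ) / 2 - 1))
            * ((zb 0 * z 0 + zb 1 * z 1) * zt A0)
            * ((w ^ ((1 : ℂ) / 2)) ^ 2)⁻¹ := by
  fin_cases B <;> simp only [Fin.zero_eta, Fin.mk_one, Fin.isValue]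
  · have e : (fun x : V => gfun A 0 z zb zt x)
        = fun x : V => ((-(![-(zb 1), zb 0] A)) * x 0 + 0 * x 1 + z A * (-(zt 1))) /
            ((((zb 0 * z 0 + zb 1 * z 1) * zt 0) * x 0
              + ((zb 0 * z 0 + zb 1 * z 1) * zt 1) * x 1) ^ ((1 : ℂ) / 2)) := by
      funext x
      simp only [gfun, Fin.sum_univ_two, Matrix.cons_val_zero, Matrix.cons_val_one,
        Matrix.head_cons]
      congr 1
      · ring
      · congr 1; ring
    rw [d4, e, d_quot (-(![-(zb 1), zb 0] A)) 0 (z A * (-(zt 1)))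
      ((zb 0 * z 0 + zb 1 * z 1) * zt 0) ((zb 0 * z 0 + zb 1 * z 1) * zt 1)
      w ztb A0 (by rw [← hw]; ring) hsl]
    fin_cases A0 <;>
      simp only [Pi.single_apply, Matrix.cons_val_zero, Matrix.cons_val_one,
        Matrix.head_cons, Fin.zero_eta, Fin.mk_one, Fin.isValue, Fin.reduceEq, reduceIte] <;>
      ring
  · have e : (fun x : V => gfun A 1 z zb zt x)
        = fun x : V => (0 * x 0 + (-(![-(zb 1), zb 0] A)) * x 1 + z A * zt 0) /
            ((((zb 0 * z 0 + zb 1 * z 1) * zt 0) * x 0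
              + ((zb 0 * z 0 + zb 1 * z 1) * zt 1) * x 1) ^ ((1 : ℂ) / 2)) := by
      funext x
      simp only [gfun, Fin.sum_univ_two, Matrix.cons_val_zero, Matrix.cons_val_one,
        Matrix.head_cons]
      congr 1
      · ring
      · congr 1; ring
    rw [d4, e, d_quot 0 (-(![-(zb 1), zb 0] A)) (z A * zt 0)
      ((zb 0 * z 0 + zb 1 * z 1) * zt 0) ((zb 0 * z 0 + zb 1 * z 1) * zt 1)
      w ztb A0 (by rw [← hw]; ring) hsl]
    fin_cases A0 <;>
      simp only [Pi.single_apply, Matrix.cons_val_zero, Matrix.cons_val_one,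
        Matrix.head_cons, Fin.zero_eta, Fin.mk_one, Fin.isValue, Fin.reduceEq, reduceIte] <;>
      ring

end G
/-- The area-matching function `M` Poisson-commutes with `X_i`, `X̃_i` and all entries of `g`. -/
theorem stmt7 (z zt : V) (hz : normsq z ≠ 0) (hzt : normsq zt ≠ 0) :
    (∀ i : Fin 3, conjPt (pb2 Mfun (Xfun i)) z zt = 0) ∧
    (∀ i : Fin 3, conjPt (pb2 Mfun (Xtfun i)) z zt = 0) ∧
    (∀ A B : Fin 2, conjPt (pb2 Mfun (gfun A B)) z zt = 0) := by
  refine ⟨?_, ?_, ?_⟩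
  · intro i
    simp only [conjPt, pb2, Fin.sum_univ_two, d1_M, d2_M, d3_M, d4_M,
      d1_X, d2_X, d3_X, d4_X]
    ring
  · intro i
    simp only [conjPt, pb2, Fin.sum_univ_two, d1_M, d2_M, d3_M, d4_M,
      d1_Xt, d2_Xt, d3_Xt, d4_Xt]
    ring
  · intro A B
    have hpos : 0 < normsq z * normsq zt := by
      have h1 : 0 ≤ normsq z := Finset.sum_nonneg fun _ _ => Complex.normSq_nonneg _
      have h2 : 0 ≤ normsq zt := Finset.sum_nonneg fun _ _ => Complex.normSq_nonneg _
      exact mul_pos (lt_of_le_of_ne h1 (Ne.symm hz)) (lt_of_le_of_ne h2 (Ne.symm hzt))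
    set w : ℂ := ((normsq z * normsq zt : ℝ) : ℂ) with hwdef
    have hsl : w ∈ Complex.slitPlane := Complex.ofReal_mem_slitPlane.2 hpos
    have key : ∀ zb ztb : V,
        (zb 0 * z 0 + zb 1 * z 1) * (ztb 0 * zt 0 + ztb 1 * zt 1) = w →
        pb2 Mfun (gfun A B) z zb zt ztb = 0 := by
      intro zb ztb hw
      have e1 := fun A0 => d1_g A B A0 z zb zt ztb w hw hsl
      have e2 := fun A0 => d2_g A B A0 z zb zt ztb w hw hsl
      have e3 := fun A0 => d3_g A B A0 z zb zt ztb w hw hsl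
      have e4 := fun A0 => d4_g A B A0 z zb zt ztb w hw hsl
      simp only [pb2, Fin.sum_univ_two, d1_M, d2_M, d3_M, d4_M, e1, e2, e3, e4]
      fin_cases A <;> fin_cases B <;>
        simp only [Pi.single_apply, Matrix.cons_val_zero, Matrix.cons_val_one,
          Matrix.head_cons, Fin.zero_eta, Fin.mk_one, Fin.isValue, Fin.reduceEq,
          reduceIte] <;>
        ring
    refine key (fun C => (starRingEnd ℂ) (z C)) (fun C => (starRingEnd ℂ) (zt C)) ?_
    have hc : ∀ a : ℂ, (starRingEnd ℂ) a * a = ((Complex.normSq a : ℝ) : ℂ) := fun a => by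
      rw [mul_comm, Complex.mul_conj]
    simp only [hc]
    rw [hwdef]
    push_cast [normsq, Fin.sum_univ_two]
    ring
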